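/- arXiv:math/9806109 — 4 statements merged into one kernel-verified Lean document; each statement's English description precedes it below -/
import Mathlib

section
/- For every n ≥ 1 there exists a polynomial Pₙ in the 2(n−1) variables U₁,…,U_{n−1}, V₁,…,V_{n−1}, lying in the ideal generated by the products {U_i·V_j : 1 ≤ i, j ≤ n−1}, such that for all ψ, φ ∈ G₂: δₙ(ψ ∘ φ) = δₙ(ψ) + δₙ(φ) + Pₙ(δ₁(ψ),…,δ_{n−1}(ψ), δ₁(φ),…,δ_{n−1}(φ)). (Group-level realization of Lemma 1 of Section III: Δδₙ = δₙ⊗1 + 1⊗δₙ + R_{n−1} with R_{n−1} ∈ ℋ_{n−1,0} ⊗ ℋ_{n−1,0}.) -/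
open scoped ContDiff
open MvPolynomial Finset


/-- Membership in the group `G₂` of smooth diffeomorphisms `ψ` of `ℝ` with `ψ' > 0`,
`ψ(0) = 0` and `ψ'(0) = 1`. -/
def InG₂ (ψ : ℝ → ℝ) : Prop :=
  ContDiff ℝ (⊤ : ℕ∞) ψ ∧ Function.Bijective ψ ∧ (∀ x : ℝ, 0 < deriv ψ x) ∧
    ψ 0 = 0 ∧ deriv ψ 0 = 1

/-- The coordinates `δₙ(ψ) = (log ψ')⁽ⁿ⁾(0)` on `G₂`. -/
noncomputable def δcoord (n : ℕ) (ψ : ℝ → ℝ) : ℝ :=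
  iteratedDeriv n (fun x => Real.log (deriv ψ x)) 0

private lemma itd_add {f g : ℝ → ℝ} (hf : ContDiff ℝ ∞ f) (hg : ContDiff ℝ ∞ g)
    (n : ℕ) (x : ℝ) :
    iteratedDeriv n (fun y => f y + g y) x = iteratedDeriv n f x + iteratedDeriv n g x := by
  rw [← iteratedDerivWithin_univ, ← iteratedDerivWithin_univ, ← iteratedDerivWithin_univ]
  exact iteratedDerivWithin_add (Set.mem_univ x) uniqueDiffOn_univ
    ((hf.of_le (WithTop.coe_le_coe.mpr le_top)).contDiffWithinAt)
    ((hg.of_le (WithTop.coe_le_coe.mpr le_top)).contDiffWithinAt)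

private lemma itd_mul' : ∀ (n : ℕ) (f g : ℝ → ℝ), ContDiff ℝ ∞ f → ContDiff ℝ ∞ g → ∀ x : ℝ,
      iteratedDeriv n (fun y => f y * g y) x =
        ∑ j ∈ range (n + 1), (n.choose j : ℝ) * iteratedDeriv j f x
          * iteratedDeriv (n - j) g x := by
  intro n
  induction n with
  | zero => intro f g hf hg x; simp
  | succ n IH =>
    intro f g hf hg x
    have hf' : ContDiff ℝ ∞ (deriv f) := (contDiff_infty_iff_deriv.mp hf).2
    have hg' : ContDiff ℝ ∞ (deriv g) := (contDiff_infty_iff_deriv.mp hg).2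
    have hd : deriv (fun y => f y * g y) = fun y => deriv f y * g y + f y * deriv g y := by
      funext y
      exact deriv_mul ((contDiff_infty_iff_deriv.mp hf).1 y) ((contDiff_infty_iff_deriv.mp hg).1 y)
    rw [iteratedDeriv_succ', hd,
      itd_add (hf'.mul hg) (hf.mul hg') n x, IH _ _ hf' hg, IH _ _ hf hg']
    simp only [mul_assoc]
    rw [Finset.sum_choose_succ_mul (fun i j => iteratedDeriv i f x * iteratedDeriv j g x) n,
      add_comm]
    congr 1
    · refine Finset.sum_congr rfl fun j hj => ?_
      have hj' : j ≤ n := by simpa [Nat.lt_succ_iff] using hj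
      rw [← iteratedDeriv_succ', show n + 1 - j = (n - j) + 1 by omega]
    · refine Finset.sum_congr rfl fun j hj => ?_
      rw [← iteratedDeriv_succ']

noncomputable def Epoly : ℕ → MvPolynomial ℕ ℝ
  | 0 => 1
  | (k+1) => ∑ j ∈ Finset.range (k+1),
      (k.choose j : MvPolynomial ℕ ℝ) * (X j * Epoly (k - j))
  decreasing_by omega

noncomputable def Cpoly : ℕ → ℕ → MvPolynomial ℕ ℝ
  | 0, 0 => 1
  | 0, _+1 => 0
  | _+1, 0 => 0
  | (m+1), (k+1) => ∑ j ∈ (Finset.range (m+1)).attach,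
      (m.choose j.1 : MvPolynomial ℕ ℝ) * (Cpoly j.1 k * Epoly (m - j.1))
  decreasing_by exact Nat.lt_succ_of_le (Nat.lt_succ_iff.mp (Finset.mem_range.mp j.2))

lemma Cpoly_zero (m : ℕ) : Cpoly (m+1) 0 = 0 := by rw [Cpoly]

lemma Cpoly_eq_zero : ∀ m k : ℕ, m < k → Cpoly m k = 0 := by
  intro m
  induction m using Nat.strong_induction_on with
  | _ m IH =>
    intro k hk
    match m, k, hk with
    | 0, (k+1), _ => rw [Cpoly]
    | (m+1), (k+1), hk =>
      rw [Cpoly]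
      refine Finset.sum_eq_zero fun j _ => ?_
      rw [IH j.1 (by have := Finset.mem_range.mp j.2; omega) k
        (by have := Finset.mem_range.mp j.2; omega), zero_mul, mul_zero]

lemma Cpoly_diag : ∀ m : ℕ, Cpoly m m = 1 := by
  intro m
  induction m with
  | zero => rw [Cpoly]
  | succ m IH =>
    rw [Cpoly]
    rw [Finset.sum_attach (Finset.range (m+1))
      (fun j => (m.choose j : MvPolynomial ℕ ℝ) * (Cpoly j m * Epoly (m - j)))]
    rw [Finset.sum_eq_single m]
    · simp [IH, Epoly]
    · intro j hj hne
      rw [Cpoly_eq_zero j m (by have := Finset.mem_range.mp hj; omega), zero_mul, mul_zero]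
    · intro h; exact absurd (Finset.self_mem_range_succ m) h

lemma E_correct {φ : ℝ → ℝ} (hφ : ContDiff ℝ ∞ φ) (hφpos : ∀ x, 0 < deriv φ x)
    (hφ'0 : deriv φ 0 = 1) :
    ∀ k : ℕ, iteratedDeriv k (deriv φ) 0
      = eval (fun i => iteratedDeriv (i+1) (fun x => Real.log (deriv φ x)) 0) (Epoly k) := by
  have hφ' : ContDiff ℝ ∞ (deriv φ) := (contDiff_infty_iff_deriv.mp hφ).2
  have hsm : ContDiff ℝ ∞ (fun x => Real.log (deriv φ x)) :=
    hφ'.log (fun x => (hφpos x).ne')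
  have hsm' : ContDiff ℝ ∞ (deriv fun x => Real.log (deriv φ x)) :=
    (contDiff_infty_iff_deriv.mp hsm).2
  have hd : deriv (deriv φ) =
      fun x => deriv (fun x => Real.log (deriv φ x)) x * deriv φ x := by
    funext x
    have hexp : deriv φ = fun y => Real.exp (Real.log (deriv φ y)) :=
      funext fun y => (Real.exp_log (hφpos y)).symm
    conv_lhs => rw [hexp]
    rw [deriv_exp ((contDiff_infty_iff_deriv.mp hsm).1 x), Real.exp_log (hφpos x), mul_comm]
  intro k
  induction k using Nat.strong_induction_on with
  | _ k IH =>
    match k with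
    | 0 => simp [Epoly, hφ'0]
    | (k+1) =>
      rw [iteratedDeriv_succ', hd, itd_mul' k _ _ hsm' hφ' 0, Epoly, map_sum]
      refine Finset.sum_congr rfl fun j hj => ?_
      rw [map_mul, map_mul, eval_X, ← iteratedDeriv_succ', IH (k-j) (by omega)]
      push_cast [map_natCast]
      ring

lemma C_correct {φ : ℝ → ℝ} (hφ : ContDiff ℝ ∞ φ) (hφpos : ∀ x, 0 < deriv φ x)
    (hφ0 : φ 0 = 0) (hφ'0 : deriv φ 0 = 1) :
    ∀ (m : ℕ) (g : ℝ → ℝ), ContDiff ℝ ∞ g →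
      iteratedDeriv m (fun x => g (φ x)) 0
        = ∑ k ∈ range (m+1), iteratedDeriv k g 0 *
            eval (fun i => iteratedDeriv (i+1) (fun x => Real.log (deriv φ x)) 0)
              (Cpoly m k) := by
  set v : ℕ → ℝ := fun i => iteratedDeriv (i+1) (fun x => Real.log (deriv φ x)) 0 with hv
  have hφ' : ContDiff ℝ ∞ (deriv φ) := (contDiff_infty_iff_deriv.mp hφ).2
  intro m
  induction m using Nat.strong_induction_on with
  | _ m IH =>
    match m with
    | 0 =>
      intro g hg
      simp [Cpoly, hφ0]
    | (m+1) =>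
      intro g hg
      have hg' : ContDiff ℝ ∞ (deriv g) := (contDiff_infty_iff_deriv.mp hg).2
      have hcomp : deriv (fun x => g (φ x)) = fun x => deriv g (φ x) * deriv φ x := by
        funext x
        exact deriv_comp x ((contDiff_infty_iff_deriv.mp hg).1 (φ x))
          ((contDiff_infty_iff_deriv.mp hφ).1 x)
      rw [iteratedDeriv_succ', hcomp, itd_mul' m (fun x => deriv g (φ x)) (deriv φ) (hg'.comp hφ) hφ' 0]
      calc
        ∑ j ∈ range (m+1), (m.choose j : ℝ)
              * iteratedDeriv j (fun x => deriv g (φ x)) 0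
              * iteratedDeriv (m-j) (deriv φ) 0
          = ∑ j ∈ range (m+1), ∑ k ∈ range (m+1),
              iteratedDeriv (k+1) g 0 *
                ((m.choose j : ℝ) * (eval v (Cpoly j k) * eval v (Epoly (m-j)))) := by
            refine Finset.sum_congr rfl fun j hj => ?_
            have hjm : j < m + 1 := Finset.mem_range.mp hj
            rw [IH j hjm (deriv g) hg', E_correct hφ hφpos hφ'0 (m-j),
              Finset.mul_sum, Finset.sum_mul]
            rw [Finset.sum_subset (Finset.range_subset_range.mpr (by omega : j+1 ≤ m+1))
              (fun k _ hk' => by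
                rw [Cpoly_eq_zero j k (by simp only [Finset.mem_range] at hk' ⊢; omega),
                  map_zero, mul_zero, mul_zero, zero_mul])]
            refine Finset.sum_congr rfl fun k hk => ?_
            rw [← iteratedDeriv_succ']
            ring
        _ = ∑ k ∈ range (m+1), ∑ j ∈ range (m+1),
              iteratedDeriv (k+1) g 0 *
                ((m.choose j : ℝ) * (eval v (Cpoly j k) * eval v (Epoly (m-j)))) :=
            Finset.sum_comm
        _ = ∑ k ∈ range (m+1+1), iteratedDeriv k g 0 * eval v (Cpoly (m+1) k) := by
            rw [Finset.sum_range_succ'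
              (fun k => iteratedDeriv k g 0 * eval v (Cpoly (m+1) k)) (m+1)]
            rw [Cpoly_zero, map_zero, mul_zero, add_zero]
            refine Finset.sum_congr rfl fun k hk => ?_
            rw [show Cpoly (m+1) (k+1) = ∑ j ∈ (Finset.range (m+1)).attach,
                (m.choose j.1 : MvPolynomial ℕ ℝ) * (Cpoly j.1 k * Epoly (m - j.1))
              from by rw [Cpoly]]
            rw [map_sum, Finset.sum_attach (Finset.range (m+1))
              (fun j => eval v ((m.choose j : MvPolynomial ℕ ℝ) * (Cpoly j k * Epoly (m - j)))),
              Finset.mul_sum]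
            refine Finset.sum_congr rfl fun j hj => ?_
            rw [map_mul, map_mul, map_natCast]

lemma Emem : ∀ k : ℕ, 1 ≤ k →
    Epoly k ∈ Ideal.span (Set.range (X : ℕ → MvPolynomial ℕ ℝ)) := by
  intro k hk
  match k, hk with
  | (k+1), _ =>
    rw [Epoly]
    refine Ideal.sum_mem _ fun j _ => ?_
    exact Ideal.mul_mem_left _ _ (Ideal.mul_mem_right _ _
      (Ideal.subset_span ⟨j, rfl⟩))

lemma Cmem : ∀ m k : ℕ, k < m →
    Cpoly m k ∈ Ideal.span (Set.range (X : ℕ → MvPolynomial ℕ ℝ)) := by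
  intro m
  induction m using Nat.strong_induction_on with
  | _ m IH =>
    intro k hk
    match m, k, hk with
    | (m+1), 0, _ => rw [Cpoly_zero]; exact zero_mem _
    | (m+1), (k+1), hk =>
      rw [Cpoly]
      refine Ideal.sum_mem _ fun j _ => ?_
      refine Ideal.mul_mem_left _ _ ?_
      have hjm : j.1 < m + 1 := Finset.mem_range.mp j.2
      by_cases hj : j.1 = m
      · exact Ideal.mul_mem_right _ _ (IH j.1 (by omega) k (by omega))
      · exact Ideal.mul_mem_left _ _ (Emem (m - j.1) (by omega))

lemma Esupp : ∀ k : ℕ, Epoly k ∈ supported ℝ {i : ℕ | i < k} := by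
  intro k
  induction k using Nat.strong_induction_on with
  | _ k IH =>
    match k with
    | 0 => rw [Epoly]; exact one_mem _
    | (k+1) =>
      rw [Epoly]
      refine Subalgebra.sum_mem _ fun j hj => ?_
      have hjk : j < k + 1 := Finset.mem_range.mp hj
      refine mul_mem (Subalgebra.natCast_mem _ _) (mul_mem ?_ ?_)
      · exact (X_mem_supported (R := ℝ)).mpr (by simpa using hjk)
      · exact supported_mono (fun i (hi : i < k - j) => by simp only [Set.mem_setOf_eq]; omega)
          (IH (k - j) (by omega))

lemma Csupp : ∀ m k : ℕ, Cpoly m k ∈ supported ℝ {i : ℕ | i + k < m} := by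
  intro m
  induction m using Nat.strong_induction_on with
  | _ m IH =>
    intro k
    match m, k with
    | 0, 0 => rw [Cpoly]; exact one_mem _
    | 0, (k+1) => rw [Cpoly]; exact zero_mem _
    | (m+1), 0 => rw [Cpoly_zero]; exact zero_mem _
    | (m+1), (k+1) =>
      rw [Cpoly]
      refine Subalgebra.sum_mem _ fun j _ => ?_
      have hjm : j.1 < m + 1 := Finset.mem_range.mp j.2
      by_cases hjk : j.1 < k
      · rw [Cpoly_eq_zero j.1 k hjk, zero_mul, mul_zero]; exact zero_mem _
      · refine mul_mem (Subalgebra.natCast_mem _ _) (mul_mem ?_ ?_)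
        · exact supported_mono (fun i (hi : i + k < j.1) => by
            simp only [Set.mem_setOf_eq]; omega) (IH j.1 (by omega) k)
        · exact supported_mono (fun i (hi : i < m - j.1) => by
            simp only [Set.mem_setOf_eq]; omega) (Esupp (m - j.1))

theorem delta_cocycle_aux (m : ℕ) :
    ∃ P : MvPolynomial (Fin m ⊕ Fin m) ℝ,
      P ∈ Ideal.span {q : MvPolynomial (Fin m ⊕ Fin m) ℝ |
          ∃ i j : Fin m, q = X (Sum.inl i) * X (Sum.inr j)} ∧
      ∀ ψ φ : ℝ → ℝ, InG₂ ψ → InG₂ φ →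
        δcoord (m+1) (ψ ∘ φ) = δcoord (m+1) ψ + δcoord (m+1) φ +
          eval (Sum.elim (fun i : Fin m => δcoord (i.val + 1) ψ)
            (fun j : Fin m => δcoord (j.val + 1) φ)) P := by
  have Hq : ∀ k : Fin m, ∃ q : MvPolynomial {i : ℕ // i ∈ {j : ℕ | j < m}} ℝ,
      rename (Subtype.val) q = Cpoly (m+1) (k.1+1) := by
    intro k
    have h1 : Cpoly (m+1) (k.1+1) ∈ supported ℝ {j : ℕ | j < m} :=
      supported_mono (fun i (hi : i + (k.1+1) < m + 1) => by
        simp only [Set.mem_setOf_eq]; omega) (Csupp (m+1) (k.1+1))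
    rw [supported_eq_range_rename] at h1
    obtain ⟨q, hq⟩ := h1
    exact ⟨q, hq⟩
  choose q hq using Hq
  set σf : {i : ℕ // i ∈ {j : ℕ | j < m}} → (Fin m ⊕ Fin m) :=
    (fun i => Sum.inr ⟨i.1, i.2⟩) with hσ
  refine ⟨∑ k : Fin m, X (Sum.inl k) * rename σf (q k), ?_, ?_⟩
  · -- ideal membership
    refine Ideal.sum_mem _ fun k _ => ?_
    have hc0 : constantCoeff (Cpoly (m+1) (k.1+1)) = 0 := by
      have hle : Ideal.span (Set.range (X : ℕ → MvPolynomial ℕ ℝ)) ≤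
          RingHom.ker constantCoeff := by
        rw [Ideal.span_le]
        rintro _ ⟨i, rfl⟩
        simp [RingHom.mem_ker]
      simpa [RingHom.mem_ker] using hle (Cmem (m+1) (k.1+1) (by omega))
    have hq0 : constantCoeff (q k) = 0 := by
      have h2 := constantCoeff_rename (Subtype.val) (q k)
      rw [hq k, hc0] at h2
      exact h2.symm
    have hqspan : q k ∈ Ideal.span
        (Set.range (X : {i : ℕ // i ∈ {j : ℕ | j < m}} → _)) := by
      rw [← Set.image_univ, mem_ideal_span_X_image]
      intro mon hmon
      by_contra hcon
      push_neg at hcon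
      have hmon0 : mon = 0 := Finsupp.ext fun i => hcon i (Set.mem_univ i)
      rw [MvPolynomial.mem_support_iff, hmon0] at hmon
      exact hmon hq0
    refine Submodule.span_induction
      (p := fun x _ => X (Sum.inl k) * rename σf x ∈ Ideal.span
        {q : MvPolynomial (Fin m ⊕ Fin m) ℝ |
          ∃ i j : Fin m, q = X (Sum.inl i) * X (Sum.inr j)})
      ?_ ?_ ?_ ?_ hqspan
    · rintro _ ⟨i, rfl⟩
      rw [rename_X]
      exact Ideal.subset_span ⟨k, ⟨i.1, i.2⟩, rfl⟩
    · simp only [map_zero, mul_zero]; exact zero_mem _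
    · intro x y _ _ hx hy
      rw [map_add, mul_add]; exact add_mem hx hy
    · intro a x _ hx
      rw [smul_eq_mul, map_mul, mul_left_comm]
      exact Ideal.mul_mem_left _ _ hx
  · -- the identity
    intro ψ φ hψ hφ
    obtain ⟨hψs, -, hψpos, hψ0, hψ'1⟩ := hψ
    obtain ⟨hφs, -, hφpos, hφ0, hφ'1⟩ := hφ
    have hψi : ContDiff ℝ ∞ ψ := hψs.of_le (by simp)
    have hφi : ContDiff ℝ ∞ φ := hφs.of_le (by simp)
    have hψ' : ContDiff ℝ ∞ (deriv ψ) := (contDiff_infty_iff_deriv.mp hψi).2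
    have hg : ContDiff ℝ ∞ (fun x => Real.log (deriv ψ x)) :=
      hψ'.log fun x => (hψpos x).ne'
    have hφ' : ContDiff ℝ ∞ (deriv φ) := (contDiff_infty_iff_deriv.mp hφi).2
    have hh : ContDiff ℝ ∞ (fun x => Real.log (deriv φ x)) :=
      hφ'.log fun x => (hφpos x).ne'
    have hkey : (fun x => Real.log (deriv (ψ ∘ φ) x))
        = fun x => (fun y => Real.log (deriv ψ y)) (φ x) + Real.log (deriv φ x) := by
      funext x
      rw [deriv_comp x ((contDiff_infty_iff_deriv.mp hψi).1 (φ x))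
        ((contDiff_infty_iff_deriv.mp hφi).1 x),
        Real.log_mul (hψpos (φ x)).ne' (hφpos x).ne']
    have hstep : δcoord (m+1) (ψ ∘ φ) =
        (∑ k ∈ range (m+1+1), iteratedDeriv k (fun x => Real.log (deriv ψ x)) 0 *
          eval (fun i => iteratedDeriv (i+1) (fun x => Real.log (deriv φ x)) 0)
            (Cpoly (m+1) k)) + δcoord (m+1) φ := by
      show iteratedDeriv (m+1) (fun x => Real.log (deriv (ψ ∘ φ) x)) 0 = _
      rw [hkey, itd_add (f := fun x => Real.log (deriv ψ (φ x)))
        (g := fun x => Real.log (deriv φ x)) (hg.comp hφi) hh (m+1) 0,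
        C_correct hφi hφpos hφ0 hφ'1 (m+1) _ hg]
      rfl
    rw [hstep]
    rw [Finset.sum_range_succ, Cpoly_diag, map_one, mul_one,
      Finset.sum_range_succ' _ m, Cpoly_zero, map_zero, mul_zero, add_zero]
    have heval : ∀ k : Fin m,
        eval (Sum.elim (fun i : Fin m => δcoord (i.val + 1) ψ)
          (fun j : Fin m => δcoord (j.val + 1) φ)) (X (Sum.inl k) * rename σf (q k))
        = iteratedDeriv (k.1+1) (fun x => Real.log (deriv ψ x)) 0 *
            eval (fun i => iteratedDeriv (i+1) (fun x => Real.log (deriv φ x)) 0)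
              (Cpoly (m+1) (k.1+1)) := by
      intro k
      rw [map_mul, eval_X, ← hq k, eval_rename, eval_rename]
      rfl
    rw [map_sum]
    rw [Finset.sum_congr rfl fun k _ => heval k]
    rw [Fin.sum_univ_eq_sum_range
      (fun k => iteratedDeriv (k+1) (fun x => Real.log (deriv ψ x)) 0 *
        eval (fun i => iteratedDeriv (i+1) (fun x => Real.log (deriv φ x)) 0)
          (Cpoly (m+1) (k+1))) m]
    simp only [δcoord]
    ring

/-- Group-level form of Lemma 1, Section III: for each `n ≥ 1` there is a polynomial
`Pₙ` in `δ₁(ψ),…,δ_{n−1}(ψ), δ₁(φ),…,δ_{n−1}(φ)`, lying in the ideal generated by the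
products `U_i V_j`, with `δₙ(ψ ∘ φ) = δₙ(ψ) + δₙ(φ) + Pₙ(…)` for all `ψ, φ ∈ G₂`. -/
theorem delta_cocycle_polynomial (n : ℕ) (hn : 1 ≤ n) :
    ∃ P : MvPolynomial (Fin (n - 1) ⊕ Fin (n - 1)) ℝ,
      P ∈ Ideal.span {q : MvPolynomial (Fin (n - 1) ⊕ Fin (n - 1)) ℝ |
          ∃ i j : Fin (n - 1), q = MvPolynomial.X (Sum.inl i) * MvPolynomial.X (Sum.inr j)} ∧
      ∀ ψ φ : ℝ → ℝ, InG₂ ψ → InG₂ φ →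
        δcoord n (ψ ∘ φ) = δcoord n ψ + δcoord n φ +
          MvPolynomial.eval
            (Sum.elim (fun i : Fin (n - 1) => δcoord (i.val + 1) ψ)
              (fun j : Fin (n - 1) => δcoord (j.val + 1) φ)) P := by
  obtain ⟨m, rfl⟩ : ∃ m, n = m + 1 := ⟨n - 1, by omega⟩
  exact delta_cocycle_aux m
end

section
/- Let ψ : ℝ → ℝ be a C^∞ diffeomorphism with ψ' > 0 and let ξ : ℝ² → ℝ be C¹. Then for all (s,x) ∈ ℝ²: X(ξ ∘ ψ̃)(s,x) = (Xξ)(ψ̃(s,x)) + e^{−s}·(ψ''(x)/ψ'(x))·(Yξ)(ψ̃(s,x)), and Y(ξ ∘ ψ̃)(s,x) = (Yξ)(ψ̃(s,x)). (One-dimensional case of identity (9) of Section II and of Lemma 1 of Section IX: X − U_ψ X U_ψ* = −γ₁ Y, with γ₁(s,x) = e^{−s}(log ψ')'(x), while Y commutes with the action of diffeomorphisms.) -/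
/-- The horizontal vector field `X`: `(Xξ)(s,x) = e^{−s} ∂ξ/∂x`. -/
noncomputable def Xop (ξ : ℝ × ℝ → ℝ) : ℝ × ℝ → ℝ :=
  fun p => Real.exp (-p.1) * deriv (fun x => ξ (p.1, x)) p.2

/-- The vertical vector field `Y`: `(Yξ)(s,x) = −∂ξ/∂s`. -/
noncomputable def Yop (ξ : ℝ × ℝ → ℝ) : ℝ × ℝ → ℝ :=
  fun p => -deriv (fun s => ξ (s, p.2)) p.1

/-- The prolongation `ψ̃(s,x) = (s − log ψ'(x), ψ(x))`. -/
noncomputable def prolong (ψ : ℝ → ℝ) : ℝ × ℝ → ℝ × ℝ :=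
  fun p => (p.1 - Real.log (deriv ψ p.2), ψ p.2)

/-- One-dimensional case of (9), Section II, and Lemma 1 of Section IX:
`X(ξ∘ψ̃) = (Xξ)∘ψ̃ + e^{−s}(ψ''/ψ')(x) · (Yξ)∘ψ̃` and `Y(ξ∘ψ̃) = (Yξ)∘ψ̃`. -/
theorem X_Y_conjugation (ψ : ℝ → ℝ)
    (hsm : ContDiff ℝ (⊤ : ℕ∞) ψ) (hbij : Function.Bijective ψ)
    (hpos : ∀ x : ℝ, 0 < deriv ψ x)
    (ξ : ℝ × ℝ → ℝ) (hξ : ContDiff ℝ 1 ξ) :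
    ∀ s x : ℝ,
      Xop (ξ ∘ prolong ψ) (s, x) =
        Xop ξ (prolong ψ (s, x)) +
          Real.exp (-s) * (deriv (deriv ψ) x / deriv ψ x) * Yop ξ (prolong ψ (s, x)) ∧
      Yop (ξ ∘ prolong ψ) (s, x) = Yop ξ (prolong ψ (s, x)) := by
  intro s x
  have hξd : Differentiable ℝ ξ := hξ.differentiable one_ne_zero
  set a : ℝ := s - Real.log (deriv ψ x) with ha
  set b : ℝ := ψ x with hb
  set F : ℝ × ℝ →L[ℝ] ℝ := fderiv ℝ ξ (a, b) with hF
  have hFd : HasFDerivAt ξ F (a, b) := (hξd (a, b)).hasFDerivAt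
  -- partial derivatives of ξ at (a,b)
  have hpart2 : deriv (fun t => ξ (a, t)) b = F (0, 1) := by
    have h : HasDerivAt (fun t : ℝ => ((a, t) : ℝ × ℝ)) (0, 1) b :=
      (hasDerivAt_const b a).prodMk (hasDerivAt_id b)
    exact (hFd.comp_hasDerivAt b h).deriv
  have hpart1 : deriv (fun t => ξ (t, b)) a = F (1, 0) := by
    have h : HasDerivAt (fun t : ℝ => ((t, b) : ℝ × ℝ)) (1, 0) a :=
      (hasDerivAt_id a).prodMk (hasDerivAt_const a b)
    exact (hFd.comp_hasDerivAt a h).deriv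
  have hψ' : HasDerivAt ψ (deriv ψ x) x := ((hsm.differentiable (by simp)) x).hasDerivAt
  have hψ'sm : Differentiable ℝ (deriv ψ) :=
    ((contDiff_infty_iff_deriv.mp (hsm.of_le (by simp))).2).differentiable (by simp)
  have hψ'' : HasDerivAt (deriv ψ) (deriv (deriv ψ) x) x :=
    (hψ'sm x).hasDerivAt
  set d : ℝ := deriv (deriv ψ) x / deriv ψ x with hd
  have hlog : HasDerivAt (fun y => Real.log (deriv ψ y)) d x :=
    hψ''.log (hpos x).ne'
  have hcurve : HasDerivAt (fun y => ((s - Real.log (deriv ψ y), ψ y) : ℝ × ℝ))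
      (-d, deriv ψ x) x := by
    have h1 : HasDerivAt (fun y => s - Real.log (deriv ψ y)) (-d) x := by
      have h := (hasDerivAt_const x s).sub hlog; rw [zero_sub] at h; exact h
    exact h1.prodMk hψ'
  have hcomp : HasDerivAt (fun y => ξ (s - Real.log (deriv ψ y), ψ y))
      (F (-d, deriv ψ x)) x := hFd.comp_hasDerivAt x hcurve
  have hlin : F (-d, deriv ψ x) = -d * F (1, 0) + deriv ψ x * F (0, 1) := by
    have : ((-d, deriv ψ x) : ℝ × ℝ) = (-d) • ((1, 0) : ℝ × ℝ) + (deriv ψ x) • (0, 1) := by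
      simp [Prod.ext_iff]
    rw [this, map_add, map_smul, map_smul]
    simp [smul_eq_mul]
  constructor
  · have hXL : Xop (ξ ∘ prolong ψ) (s, x)
        = Real.exp (-s) * (-d * F (1, 0) + deriv ψ x * F (0, 1)) := by
      simp only [Xop, Function.comp, prolong]
      rw [hcomp.deriv, hlin]
    have hXR : Xop ξ (prolong ψ (s, x))
        = Real.exp (-s) * deriv ψ x * F (0, 1) := by
      simp only [Xop, prolong, ← ha, ← hb, hpart2]
      rw [neg_sub, Real.exp_sub, Real.exp_log (hpos x), Real.exp_neg]
      ring
    have hcurve2 : HasDerivAt (fun t : ℝ => ((t, b) : ℝ × ℝ)) (1, 0) a :=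
      (hasDerivAt_id a).prodMk (hasDerivAt_const a b)
    have hYR : Yop ξ (prolong ψ (s, x)) = -F (1, 0) := by
      simp only [Yop, prolong, ← ha, ← hb, hpart1]
    rw [hXL, hXR, hYR]
    ring
  · have hcurve3 : HasDerivAt (fun t : ℝ => ((t - Real.log (deriv ψ x), ψ x) : ℝ × ℝ))
        (1, 0) s := by
      have h1 : HasDerivAt (fun t : ℝ => t - Real.log (deriv ψ x)) 1 s := by
        have h := (hasDerivAt_id s).sub (hasDerivAt_const s (Real.log (deriv ψ x))); rw [sub_zero] at h; exact h
      exact h1.prodMk (hasDerivAt_const s (ψ x))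
    have hcomp3 : HasDerivAt (fun t : ℝ => ξ (t - Real.log (deriv ψ x), ψ x))
        (F (1, 0)) s := by
      have := hFd.comp_hasDerivAt s hcurve3
      exact this
    have hYL : Yop (ξ ∘ prolong ψ) (s, x) = -F (1, 0) := by
      simp only [Yop, Function.comp, prolong]
      rw [hcomp3.deriv]
    have hYR : Yop ξ (prolong ψ (s, x)) = -F (1, 0) := by
      simp only [Yop, prolong, ← ha, ← hb, hpart1]
    rw [hYL, hYR]
end

section
/- Let g : ℝ → ℝ be C^∞ and for n ≥ 1 set γₙ(s,x) := e^{−ns}·g⁽ⁿ⁾(x), where g⁽ⁿ⁾ is the n-th derivative. Let Mₙ denote multiplication by γₙ. Then for every C^∞ function ξ : ℝ² → ℝ and all (s,x): (i) Y(Xξ) − X(Yξ) = Xξ; (ii) Y(γₙ·ξ) − γₙ·(Yξ) = n·γₙ·ξ; (iii) X(γₙ·ξ) − γₙ·(Xξ) = γ_{n+1}·ξ; (iv) γₙ·γₘ = γₘ·γₙ. Thus the operators X, Y, Mₙ realize the defining relations [Y,X] = X, [Y,δₙ] = nδₙ, [X,δₙ] = δ_{n+1}, [δₙ,δₘ] =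 0 of the Hopf algebra ℋ (relations (1) of Section III, with g = log ψ'). -/
/-- `γₙ(s,x) = e^{−ns} g⁽ⁿ⁾(x)`. -/
noncomputable def γop (g : ℝ → ℝ) (n : ℕ) : ℝ × ℝ → ℝ :=
  fun p => Real.exp (-(n : ℝ) * p.1) * iteratedDeriv n g p.2

lemma hasDerivAt_px (ξ : ℝ × ℝ → ℝ) (hξ : Differentiable ℝ ξ) (s x : ℝ) :
    HasDerivAt (fun y => ξ (s, y)) (fderiv ℝ ξ (s, x) (0, 1)) x := by
  have h1 : HasDerivAt (fun y : ℝ => ((s, y) : ℝ × ℝ)) ((0 : ℝ), (1 : ℝ)) x :=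
    (hasDerivAt_const x s).prodMk (hasDerivAt_id x)
  exact (hξ (s, x)).hasFDerivAt.comp_hasDerivAt x h1

lemma hasDerivAt_ps (ξ : ℝ × ℝ → ℝ) (hξ : Differentiable ℝ ξ) (s x : ℝ) :
    HasDerivAt (fun t => ξ (t, x)) (fderiv ℝ ξ (s, x) (1, 0)) s := by
  have h1 : HasDerivAt (fun t : ℝ => ((t, x) : ℝ × ℝ)) ((1 : ℝ), (0 : ℝ)) s :=
    (hasDerivAt_id s).prodMk (hasDerivAt_const s x)
  exact (hξ (s, x)).hasFDerivAt.comp_hasDerivAt s h1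

lemma hasDerivAt_expneg (c t : ℝ) :
    HasDerivAt (fun u : ℝ => Real.exp (-c * u)) (-c * Real.exp (-c * t)) t := by
  have h := ((hasDerivAt_id t).const_mul (-c)).exp
  simpa [mul_comm] using h

/-- Relations (1) of Section III realized by the operators `X`, `Y` and
multiplication by `γₙ`: `[Y,X] = X`, `[Y,γₙ] = nγₙ`, `[X,γₙ] = γ_{n+1}`,
`[γₙ,γₘ] = 0`. -/
theorem X_Y_delta_relations (g : ℝ → ℝ) (hg : ContDiff ℝ (⊤ : ℕ∞) g) :
    ∀ ξ : ℝ × ℝ → ℝ, ContDiff ℝ (⊤ : ℕ∞) ξ →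
      ∀ (p : ℝ × ℝ) (n m : ℕ), 1 ≤ n → 1 ≤ m →
        (Yop (Xop ξ) p - Xop (Yop ξ) p = Xop ξ p) ∧
        (Yop (fun q => γop g n q * ξ q) p - γop g n p * Yop ξ p = n * γop g n p * ξ p) ∧
        (Xop (fun q => γop g n q * ξ q) p - γop g n p * Xop ξ p = γop g (n + 1) p * ξ p) ∧
        (γop g n p * γop g m p = γop g m p * γop g n p) := by
  intro ξ hξ p n m _ _
  obtain ⟨s, x⟩ := p
  have hξd : Differentiable ℝ ξ := hξ.differentiable (by simp)
  set D : ℝ × ℝ → (ℝ × ℝ →L[ℝ] ℝ) := fderiv ℝ ξ with hD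
  have hDc : ContDiff ℝ (⊤ : ℕ∞) D := hξ.fderiv_right (by simp)
  have hDd : Differentiable ℝ D := hDc.differentiable (by simp)
  have hFc : ∀ v : ℝ × ℝ, Differentiable ℝ (fun q => D q v) := fun v =>
    (hDc.clm_apply contDiff_const).differentiable (by simp)
  have hfdF : ∀ (v w : ℝ × ℝ) (q : ℝ × ℝ),
      fderiv ℝ (fun q => D q v) q w = fderiv ℝ D q w v := by
    intro v w q
    rw [fderiv_clm_apply (hDd q) (differentiableAt_const v)]
    simp
  have hsymm : ∀ v w : ℝ × ℝ, fderiv ℝ D (s, x) v w = fderiv ℝ D (s, x) w v := by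
    intro v w
    exact second_derivative_symmetric (fun y => (hξd y).hasFDerivAt)
      ((hDd (s, x)).hasFDerivAt) v w
  have hexp1 : ∀ t : ℝ, HasDerivAt (fun u : ℝ => Real.exp (-u)) (-Real.exp (-t)) t := by
    intro t
    simpa using hasDerivAt_expneg 1 t
  have hgd : ∀ y : ℝ, HasDerivAt (iteratedDeriv n g) (iteratedDeriv (n + 1) g y) y := by
    intro y
    have h1 : DifferentiableAt ℝ (iteratedDeriv n g) y :=
      (hg.differentiable_iteratedDeriv n (by exact_mod_cast lt_top_iff_ne_top.mpr (by simp))) y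
    simpa [iteratedDeriv_succ] using h1.hasDerivAt
  refine ⟨?_, ?_, ?_, mul_comm _ _⟩
  · -- [Y,X] = X
    have h1 : HasDerivAt (fun t => Real.exp (-t) * deriv (fun y => ξ (t, y)) x)
        (-Real.exp (-s) * D (s, x) (0, 1)
          + Real.exp (-s) * fderiv ℝ D (s, x) (1, 0) (0, 1)) s := by
      have hF : HasDerivAt (fun t => D (t, x) (0, 1))
          (fderiv ℝ (fun q => D q (0, 1)) (s, x) (1, 0)) s :=
        hasDerivAt_ps (fun q => D q (0, 1)) (hFc (0, 1)) s x
      rw [hfdF] at hF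
      have h := (hexp1 s).mul hF
      refine (h.congr_of_eventuallyEq ?_).congr_deriv (by ring)
      filter_upwards with t
      rw [(hasDerivAt_px ξ hξd t x).deriv]; rfl
    have h2 : HasDerivAt (fun y => -deriv (fun t => ξ (t, y)) s)
        (-(fderiv ℝ D (s, x) (0, 1) (1, 0))) x := by
      have hF : HasDerivAt (fun y => D (s, y) (1, 0))
          (fderiv ℝ (fun q => D q (1, 0)) (s, x) (0, 1)) x :=
        hasDerivAt_px (fun q => D q (1, 0)) (hFc (1, 0)) s x
      rw [hfdF] at hF
      refine (hF.neg.congr_of_eventuallyEq ?_).congr_deriv rfl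
      filter_upwards with y
      rw [(hasDerivAt_ps ξ hξd s y).deriv]; rfl
    simp only [Yop, Xop]
    rw [h1.deriv, h2.deriv, (hasDerivAt_px ξ hξd s x).deriv, hsymm (1, 0) (0, 1)]
    ring
  · -- [Y, γₙ] = n γₙ
    have h1 : HasDerivAt (fun t => Real.exp (-(n : ℝ) * t) * iteratedDeriv n g x * ξ (t, x))
        ((-(n : ℝ) * Real.exp (-(n : ℝ) * s) * iteratedDeriv n g x) * ξ (s, x)
          + (Real.exp (-(n : ℝ) * s) * iteratedDeriv n g x) * D (s, x) (1, 0)) s :=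
      ((hasDerivAt_expneg (n : ℝ) s).mul_const (iteratedDeriv n g x)).mul
        (hasDerivAt_ps ξ hξd s x)
    simp only [Yop, γop]
    rw [h1.deriv, (hasDerivAt_ps ξ hξd s x).deriv]
    ring
  · -- [X, γₙ] = γ_{n+1}
    have h1 : HasDerivAt (fun y => Real.exp (-(n : ℝ) * s) * iteratedDeriv n g y * ξ (s, y))
        ((Real.exp (-(n : ℝ) * s) * iteratedDeriv (n + 1) g x) * ξ (s, x)
          + (Real.exp (-(n : ℝ) * s) * iteratedDeriv n g x) * D (s, x) (0, 1)) x :=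
      ((hgd x).const_mul (Real.exp (-(n : ℝ) * s))).mul (hasDerivAt_px ξ hξd s x)
    simp only [Xop, γop]
    rw [h1.deriv, (hasDerivAt_px ξ hξd s x).deriv]
    push_cast
    rw [show (-(((n : ℝ) + 1)) * s) = (-(n : ℝ) * s) + (-s) by ring, Real.exp_add]
    ring
end

section
/- Let ψ₁, ψ₂ : ℝ → ℝ be C^∞ diffeomorphisms with ψ₁' > 0, ψ₂' > 0, and define γ^ψ(s,x) := e^{−s}·(ψ''(x)/ψ'(x)). Then the cocycle identity γ^{ψ₂∘ψ₁}(s,x) = γ^{ψ₂}(ψ̃₁(s,x)) + γ^{ψ₁}(s,x) holds for all (s,x) ∈ ℝ². (One-dimensional case of the cocycle property (13) of Section II, γ̃_{ψ₂ψ₁} = ψ̃₁*(γ_{ψ₂}) + γ_{ψ₁}, which makes each δ_{ij}^k a derivation of the crossed product algebra.) -/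
/-- `γ^ψ(s,x) = e^{−s} ψ''(x)/ψ'(x)`. -/
noncomputable def γψ (ψ : ℝ → ℝ) : ℝ × ℝ → ℝ :=
  fun p => Real.exp (-p.1) * (deriv (deriv ψ) p.2 / deriv ψ p.2)

/-- One-dimensional case of the cocycle property (13) of Section II:
`γ^{ψ₂∘ψ₁} = γ^{ψ₂} ∘ ψ̃₁ + γ^{ψ₁}`. -/
theorem gamma_cocycle (ψ₁ ψ₂ : ℝ → ℝ)
    (h₁sm : ContDiff ℝ (⊤ : ℕ∞) ψ₁) (h₁bij : Function.Bijective ψ₁)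
    (h₁pos : ∀ x : ℝ, 0 < deriv ψ₁ x)
    (h₂sm : ContDiff ℝ (⊤ : ℕ∞) ψ₂) (h₂bij : Function.Bijective ψ₂)
    (h₂pos : ∀ x : ℝ, 0 < deriv ψ₂ x) :
    ∀ s x : ℝ,
      γψ (ψ₂ ∘ ψ₁) (s, x) = γψ ψ₂ (prolong ψ₁ (s, x)) + γψ ψ₁ (s, x) := by
  intro s x
  obtain ⟨hd1, hd1'⟩ := contDiff_infty_iff_deriv.mp (h₁sm.of_le (by simp))
  obtain ⟨hd2, hd2'⟩ := contDiff_infty_iff_deriv.mp (h₂sm.of_le (by simp))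
  have hd1d : Differentiable ℝ (deriv ψ₁) := hd1'.differentiable (by simp)
  have hd2d : Differentiable ℝ (deriv ψ₂) := hd2'.differentiable (by simp)
  have hcomp : deriv (ψ₂ ∘ ψ₁) = fun y => deriv ψ₂ (ψ₁ y) * deriv ψ₁ y :=
    funext fun y => deriv_comp (x := y) (hd2 _) (hd1 _)
  have h2nd : deriv (deriv (ψ₂ ∘ ψ₁)) x
      = deriv (deriv ψ₂) (ψ₁ x) * deriv ψ₁ x * deriv ψ₁ x
        + deriv ψ₂ (ψ₁ x) * deriv (deriv ψ₁) x := by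
    rw [hcomp]
    have hA : DifferentiableAt ℝ (fun y => deriv ψ₂ (ψ₁ y)) x :=
      (hd2d _).comp x (hd1 x)
    rw [deriv_fun_mul hA (hd1d x)]
    have : deriv (fun y => deriv ψ₂ (ψ₁ y)) x = deriv (deriv ψ₂) (ψ₁ x) * deriv ψ₁ x :=
      deriv_comp (x := x) (hd2d _) (hd1 x)
    rw [this]
  have hb : deriv ψ₁ x ≠ 0 := (h₁pos x).ne'
  have ha : deriv ψ₂ (ψ₁ x) ≠ 0 := (h₂pos (ψ₁ x)).ne'
  simp only [γψ, prolong]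
  rw [h2nd]
  simp only [hcomp]
  have hexp : Real.exp (-(s - Real.log (deriv ψ₁ x)))
      = Real.exp (-s) * deriv ψ₁ x := by
    rw [show -(s - Real.log (deriv ψ₁ x)) = -s + Real.log (deriv ψ₁ x) by ring,
      Real.exp_add, Real.exp_log (h₁pos x)]
  rw [hexp]
  field_simp
end
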